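/- arXiv:2502.05163 — 3 statements merged into one kernel-verified Lean document; each statement's English description precedes it below -/
import Mathlib

section
/- Any reward function of the form r(x, x̃) = r*(x, x̃) + c(x) achieves the minimum of the Bradley–Terry cross-entropy loss E[ -p*(x̃_w ≻ x̃_l | x) log σ(r(x,x̃_w) - r(x,x̃_l)) ], where p*(x̃_w ≻ x̃_l | x) = σ(r*(x,x̃_w) - r*(x,x̃_l)); moreover every minimizer differs from r* by a function of x only. -/
open Finset

/-- The logistic sigmoid function. -/
noncomputable def sigmoid (t : ℝ) : ℝ := 1 / (1 + Real.exp (-t))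

lemma sigmoid_pos (t : ℝ) : 0 < sigmoid t := by unfold sigmoid; positivity

lemma sigmoid_lt_one (t : ℝ) : sigmoid t < 1 := by
  unfold sigmoid
  rw [div_lt_one (by positivity)]
  linarith [Real.exp_pos (-t)]

lemma sigmoid_neg (t : ℝ) : sigmoid (-t) = 1 - sigmoid t := by
  unfold sigmoid
  rw [neg_neg, Real.exp_neg]
  have h := Real.exp_pos t
  have h1 : (Real.exp t)⁻¹ > 0 := by positivity
  field_simp
  ring

lemma sigmoid_inj : Function.Injective sigmoid := by
  intro a b hab
  unfold sigmoid at hab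
  have ha : (0:ℝ) < 1 + Real.exp (-a) := by positivity
  have hb : (0:ℝ) < 1 + Real.exp (-b) := by positivity
  rw [div_eq_div_iff ha.ne' hb.ne', one_mul, one_mul] at hab
  have : Real.exp (-b) = Real.exp (-a) := by linarith
  have := Real.exp_injective this
  linarith
noncomputable def B (p q : ℝ) : ℝ :=
  p * (Real.log p - Real.log q) + (1 - p) * (Real.log (1 - p) - Real.log (1 - q))

lemma B_nonneg {p q : ℝ} (hp0 : 0 < p) (hp1 : p < 1) (hq0 : 0 < q) (hq1 : q < 1) :
    0 ≤ B p q := by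
  have h1 : Real.log q - Real.log p ≤ q / p - 1 := by
    have := Real.log_le_sub_one_of_pos (show (0:ℝ) < q / p by positivity)
    rwa [Real.log_div hq0.ne' hp0.ne'] at this
  have h2 : Real.log (1 - q) - Real.log (1 - p) ≤ (1 - q) / (1 - p) - 1 := by
    have := Real.log_le_sub_one_of_pos (show (0:ℝ) < (1 - q) / (1 - p) by
      apply div_pos <;> linarith)
    rwa [Real.log_div (by linarith) (by linarith)] at this
  have e1 : p * (q / p) = q := by field_simp
  have e2 : (1 - p) * ((1 - q) / (1 - p)) = 1 - q := mul_div_cancel₀ _ (by linarith)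
  have h1' := mul_le_mul_of_nonneg_left h1 hp0.le
  have h2' := mul_le_mul_of_nonneg_left h2 (by linarith : (0:ℝ) ≤ 1 - p)
  unfold B
  nlinarith [h1', h2']

lemma B_pos {p q : ℝ} (hp0 : 0 < p) (hp1 : p < 1) (hq0 : 0 < q) (hq1 : q < 1)
    (hne : q ≠ p) : 0 < B p q := by
  have h1 : Real.log q - Real.log p < q / p - 1 := by
    have := Real.log_lt_sub_one_of_pos (show (0:ℝ) < q / p by positivity)
      (by intro h; apply hne; field_simp at h; linarith)
    rwa [Real.log_div hq0.ne' hp0.ne'] at this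
  have h2 : Real.log (1 - q) - Real.log (1 - p) ≤ (1 - q) / (1 - p) - 1 := by
    have := Real.log_le_sub_one_of_pos (show (0:ℝ) < (1 - q) / (1 - p) by
      apply div_pos <;> linarith)
    rwa [Real.log_div (by linarith) (by linarith)] at this
  have e1 : p * (q / p) = q := by field_simp
  have e2 : (1 - p) * ((1 - q) / (1 - p)) = 1 - q := mul_div_cancel₀ _ (by linarith)
  have h1' := mul_lt_mul_of_pos_left h1 hp0
  have h2' := mul_le_mul_of_nonneg_left h2 (by linarith : (0:ℝ) ≤ 1 - p)
  unfold B
  nlinarith [h1', h2']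

noncomputable def Dterm {Xt : Type*} (m u v : Xt → ℝ) (w l : Xt) : ℝ :=
  m w * m l * (-(sigmoid (u w - u l)) * Real.log (sigmoid (v w - v l)))

lemma Dterm_sym {Xt : Type*} (m u v : Xt → ℝ) (w l : Xt) :
    (Dterm m u v w l - Dterm m u u w l) + (Dterm m u v l w - Dterm m u u l w)
      = m w * m l * B (sigmoid (u w - u l)) (sigmoid (v w - v l)) := by
  unfold Dterm B
  rw [show u l - u w = -(u w - u l) by ring, show v l - v w = -(v w - v l) by ring,
    sigmoid_neg, sigmoid_neg]
  ring

lemma inner_key {Xt : Type*} [Fintype Xt] (m : Xt → ℝ) (hm : ∀ t, 0 < m t)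
    (u v : Xt → ℝ) :
    (∑ w : Xt, ∑ l : Xt, Dterm m u u w l) ≤ (∑ w : Xt, ∑ l : Xt, Dterm m u v w l)
    ∧ ((∑ w : Xt, ∑ l : Xt, Dterm m u v w l) ≤ (∑ w : Xt, ∑ l : Xt, Dterm m u u w l) →
        ∀ w l, v w - v l = u w - u l) := by
  set F : Xt → Xt → ℝ := fun w l => Dterm m u v w l - Dterm m u u w l with hF
  have hdiff : (∑ w : Xt, ∑ l : Xt, Dterm m u v w l) - (∑ w : Xt, ∑ l : Xt, Dterm m u u w l)
      = ∑ w : Xt, ∑ l : Xt, F w l := by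
    simp only [hF, Finset.sum_sub_distrib]
  have hswap : (∑ w : Xt, ∑ l : Xt, F l w) = ∑ w : Xt, ∑ l : Xt, F w l :=
    Finset.sum_comm
  have hdouble : (∑ w : Xt, ∑ l : Xt,
        m w * m l * B (sigmoid (u w - u l)) (sigmoid (v w - v l)))
      = (∑ w : Xt, ∑ l : Xt, F w l) + (∑ w : Xt, ∑ l : Xt, F w l) := by
    have : ∀ w l, m w * m l * B (sigmoid (u w - u l)) (sigmoid (v w - v l))
        = F w l + F l w := fun w l => (Dterm_sym m u v w l).symm
    calc (∑ w : Xt, ∑ l : Xt, m w * m l * B (sigmoid (u w - u l)) (sigmoid (v w - v l)))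
        = ∑ w : Xt, ∑ l : Xt, (F w l + F l w) := by
          exact Finset.sum_congr rfl fun w _ => Finset.sum_congr rfl fun l _ => this w l
      _ = (∑ w : Xt, ∑ l : Xt, F w l) + (∑ w : Xt, ∑ l : Xt, F l w) := by
          simp only [Finset.sum_add_distrib]
      _ = _ := by rw [hswap]
  have hnn : ∀ w l : Xt, 0 ≤ m w * m l * B (sigmoid (u w - u l)) (sigmoid (v w - v l)) :=
    fun w l => mul_nonneg (mul_pos (hm w) (hm l)).le
      (B_nonneg (sigmoid_pos _) (sigmoid_lt_one _) (sigmoid_pos _) (sigmoid_lt_one _))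
  have hsumnn : 0 ≤ ∑ w : Xt, ∑ l : Xt,
      m w * m l * B (sigmoid (u w - u l)) (sigmoid (v w - v l)) :=
    Finset.sum_nonneg fun w _ => Finset.sum_nonneg fun l _ => hnn w l
  constructor
  · nlinarith [hsumnn, hdouble, hdiff]
  · intro hle
    have hzero : (∑ w : Xt, ∑ l : Xt,
        m w * m l * B (sigmoid (u w - u l)) (sigmoid (v w - v l))) = 0 := by
      nlinarith [hsumnn, hdouble, hdiff]
    have hall : ∀ w l : Xt, m w * m l * B (sigmoid (u w - u l)) (sigmoid (v w - v l)) = 0 := by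
      intro w l
      have h1 := (Finset.sum_eq_zero_iff_of_nonneg
        (fun w _ => Finset.sum_nonneg fun l _ => hnn w l)).mp hzero w (Finset.mem_univ w)
      exact (Finset.sum_eq_zero_iff_of_nonneg (fun l _ => hnn w l)).mp h1 l (Finset.mem_univ l)
    intro w l
    by_contra hne
    have hqp : sigmoid (v w - v l) ≠ sigmoid (u w - u l) := fun h => hne (sigmoid_inj h)
    have hBpos := B_pos (sigmoid_pos (u w - u l)) (sigmoid_lt_one _)
      (sigmoid_pos (v w - v l)) (sigmoid_lt_one _) hqp
    have := hall w l
    nlinarith [mul_pos (hm w) (hm l)]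


/-- The Bradley–Terry cross-entropy loss
`E_{x∼ρ, (w,l)∼μ(·|x)⊗μ(·|x)}[ -p*(w ≻ l | x) log σ(r(x,w) - r(x,l)) ]`
where `p*(w ≻ l | x) = σ(r*(x,w) - r*(x,l))`. -/
noncomputable def BTloss {X Xt : Type*} [Fintype X] [Fintype Xt]
    (ρ : X → ℝ) (μ : X → Xt → ℝ) (rstar r : X → Xt → ℝ) : ℝ :=
  ∑ x : X, ρ x * ∑ w : Xt, ∑ l : Xt, μ x w * μ x l *
    (-(sigmoid (rstar x w - rstar x l)) * Real.log (sigmoid (r x w - r x l)))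

set_option maxHeartbeats 1000000 in
/-- Any reward of the form `r = r* + c(x)` achieves the minimum of the Bradley–Terry
cross-entropy loss, and every minimizer differs from `r*` by a function of `x` only. -/
theorem stmt_2 {X Xt : Type*} [Fintype X] [Fintype Xt]
    (ρ : X → ℝ) (hρ0 : ∀ x, 0 ≤ ρ x) (hρ1 : ∑ x : X, ρ x = 1)
    (μ : X → Xt → ℝ) (hμ0 : ∀ x t, 0 < μ x t) (hμ1 : ∀ x, ∑ t : Xt, μ x t = 1)
    (rstar : X → Xt → ℝ) :
    (∀ c : X → ℝ, ∀ r : X → Xt → ℝ,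
      BTloss ρ μ rstar (fun x t => rstar x t + c x) ≤ BTloss ρ μ rstar r) ∧
    (∀ r : X → Xt → ℝ, (∀ r' : X → Xt → ℝ, BTloss ρ μ rstar r ≤ BTloss ρ μ rstar r') →
      ∃ c : X → ℝ, ∀ x : X, 0 < ρ x → ∀ t : Xt, r x t = rstar x t + c x) := by
  have hBT : ∀ r : X → Xt → ℝ, BTloss ρ μ rstar r
      = ∑ x : X, ρ x * ∑ w : Xt, ∑ l : Xt, Dterm (μ x) (rstar x) (r x) w l := fun _ => by
    simp only [BTloss, Dterm]
  have hstar : ∀ r : X → Xt → ℝ, BTloss ρ μ rstar rstar ≤ BTloss ρ μ rstar r := by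
    intro r
    rw [hBT, hBT]
    exact Finset.sum_le_sum fun x _ =>
      mul_le_mul_of_nonneg_left ((inner_key (μ x) (hμ0 x) (rstar x) (r x)).1) (hρ0 x)
  have hshift : ∀ c : X → ℝ,
      BTloss ρ μ rstar (fun x t => rstar x t + c x) = BTloss ρ μ rstar rstar := by
    intro c
    unfold BTloss
    refine Finset.sum_congr rfl fun x _ => ?_
    congr 1
    refine Finset.sum_congr rfl fun w _ => Finset.sum_congr rfl fun l _ => ?_
    rw [show rstar x w + c x - (rstar x l + c x) = rstar x w - rstar x l from by ring]
  refine ⟨fun c r => (hshift c) ▸ hstar r, ?_⟩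
  intro r hmin
  have heq : BTloss ρ μ rstar r = BTloss ρ μ rstar rstar := le_antisymm (hmin rstar) (hstar r)
  have hx : ∀ x : X, 0 < ρ x → ∀ w l : Xt, r x w - r x l = rstar x w - rstar x l := by
    intro x hρx
    apply (inner_key (μ x) (hμ0 x) (rstar x) (r x)).2
    have hterm : ∀ x : X, 0 ≤ ρ x * ((∑ w : Xt, ∑ l : Xt, Dterm (μ x) (rstar x) (r x) w l)
        - (∑ w : Xt, ∑ l : Xt, Dterm (μ x) (rstar x) (rstar x) w l)) := fun x =>
      mul_nonneg (hρ0 x) (by linarith [(inner_key (μ x) (hμ0 x) (rstar x) (r x)).1])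
    have hsum0 : (∑ x : X, ρ x * ((∑ w : Xt, ∑ l : Xt, Dterm (μ x) (rstar x) (r x) w l)
        - (∑ w : Xt, ∑ l : Xt, Dterm (μ x) (rstar x) (rstar x) w l))) = 0 := by
      have h1 := heq
      rw [hBT, hBT] at h1
      simp only [mul_sub, Finset.sum_sub_distrib]
      rw [h1]
      ring
    have h0 := (Finset.sum_eq_zero_iff_of_nonneg (fun x _ => hterm x)).mp hsum0 x
      (Finset.mem_univ x)
    have := mul_eq_zero.mp h0
    rcases this with h | h
    · exact absurd h hρx.ne'
    · linarith
  by_cases hXt : Nonempty Xt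
  · obtain ⟨t0⟩ := hXt
    exact ⟨fun x => r x t0 - rstar x t0, fun x hρx t => by have := hx x hρx t t0; show r x t = rstar x t + (r x t0 - rstar x t0); linarith⟩
  · exact ⟨fun _ => 0, fun x _ t => absurd ⟨t⟩ hXt⟩
end

section
/- The generator best-response map T_φ, defined by T_φ(p_θ)(x̃|x,y) = p_ref(x̃|x,y) p_θ(y|x̃)^{-1/β} / Σ_{x̃'} p_ref(x̃'|x,y) p_θ(y|x̃')^{-1/β}, is Lipschitz in ℓ¹ norm: ‖T_φ(p_θ) - T_φ(p_{θ'})‖₁ ≤ 2 δ^{-1} β^{-1} γ^{-1-1/β} |X| · ‖p_θ - p_{θ'}‖₁. -/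
/-!
For a fixed context `c`, write `Z_c = Σ pref c x̃ θ(x̃, y)^{-1/β}` for the normaliser. Since
`f/Z - g/Z' = (f - g)/Z + g (Z' - Z)/(Z Z')` and `Σ g = Z'`, normalising two nonnegative vectors
is Lipschitz in ℓ¹ with constant `2/Z ≤ 2/δ`. On `[γ, ∞)` the map `t ↦ t^{-1/β}` is Lipschitz with
constant `β⁻¹ γ^{-1-1/β}` (mean value theorem), and `pref ≤ 1`. Summing over the `|X|` contexts
with a given label `y` gives the factor `|X|`.
-/

open Finset

theorem abs_rpow_neg_sub_rpow_neg_le {γ r a b : ℝ} (hγ : 0 < γ) (hr : 0 ≤ r)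
    (ha : γ ≤ a) (hb : γ ≤ b) :
    |a ^ (-r) - b ^ (-r)| ≤ r * γ ^ (-r - 1) * |a - b| := by
  have hderiv : ∀ t ∈ Set.Ici γ,
      HasDerivWithinAt (fun t : ℝ => t ^ (-r)) (-r * t ^ (-r - 1)) (Set.Ici γ) t :=
    fun t ht => (Real.hasDerivAt_rpow_const (Or.inl (hγ.trans_le ht).ne')).hasDerivWithinAt
  have hbound : ∀ t ∈ Set.Ici γ, ‖-r * t ^ (-r - 1)‖ ≤ r * γ ^ (-r - 1) := fun t ht => by
    rw [Real.norm_eq_abs, abs_mul, abs_neg, abs_of_nonneg hr,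
      abs_of_pos (Real.rpow_pos_of_pos (hγ.trans_le ht) _)]
    exact mul_le_mul_of_nonneg_left (Real.rpow_le_rpow_of_nonpos hγ ht (by linarith)) hr
  simpa only [Real.norm_eq_abs] using
    (convex_Ici γ).norm_image_sub_le_of_norm_hasDerivWithin_le hderiv hbound hb ha

theorem sum_abs_div_sum_sub_div_sum_le {ι : Type*} (s : Finset ι) (f g : ι → ℝ)
    (hg : ∀ i ∈ s, 0 ≤ g i) (hf_sum : 0 < ∑ i ∈ s, f i) (hg_sum : 0 < ∑ i ∈ s, g i) :
    ∑ i ∈ s, |f i / ∑ j ∈ s, f j - g i / ∑ j ∈ s, g j|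
      ≤ 2 * (∑ i ∈ s, f i)⁻¹ * ∑ i ∈ s, |f i - g i| := by
  set Z := ∑ i ∈ s, f i
  set Z' := ∑ i ∈ s, g i
  have hZZ' : |Z - Z'| ≤ ∑ i ∈ s, |f i - g i| := by
    rw [← sum_sub_distrib]; exact abs_sum_le_sum_abs _ _
  have hsplit : ∀ i ∈ s, |f i / Z - g i / Z'| ≤ |f i - g i| / Z + g i * (|Z - Z'| / (Z * Z')) :=
    fun i hi => by
      have : f i / Z - g i / Z' = (f i - g i) / Z + g i * ((Z' - Z) / (Z * Z')) := by
        field_simp; ring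
      rw [this]
      refine (abs_add_le _ _).trans_eq ?_
      rw [abs_div, abs_of_pos hf_sum, abs_mul, abs_of_nonneg (hg i hi), abs_div,
        abs_of_pos (mul_pos hf_sum hg_sum), abs_sub_comm Z' Z]
  calc ∑ i ∈ s, |f i / Z - g i / Z'|
      ≤ ∑ i ∈ s, (|f i - g i| / Z + g i * (|Z - Z'| / (Z * Z'))) := sum_le_sum hsplit
    _ = (∑ i ∈ s, |f i - g i| + |Z - Z'|) / Z := by
        rw [sum_add_distrib, ← sum_div, ← sum_mul]
        change _ + Z' * _ = _
        field_simp
    _ ≤ (∑ i ∈ s, |f i - g i| + ∑ i ∈ s, |f i - g i|) / Z := by gcongr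
    _ = 2 * Z⁻¹ * ∑ i ∈ s, |f i - g i| := by ring

theorem sum_abs_mul_rpow_neg_sub_le {ι : Type*} (s : Finset ι) {γ r : ℝ} (hγ : 0 < γ)
    (hr : 0 ≤ r) (w a b : ι → ℝ) (hw0 : ∀ i ∈ s, 0 ≤ w i) (hw1 : ∀ i ∈ s, w i ≤ 1)
    (ha : ∀ i ∈ s, γ ≤ a i) (hb : ∀ i ∈ s, γ ≤ b i) :
    ∑ i ∈ s, |w i * a i ^ (-r) - w i * b i ^ (-r)|
      ≤ r * γ ^ (-r - 1) * ∑ i ∈ s, |a i - b i| := by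
  rw [mul_sum]
  refine sum_le_sum fun i hi => ?_
  rw [← mul_sub, abs_mul, abs_of_nonneg (hw0 i hi)]
  calc w i * |a i ^ (-r) - b i ^ (-r)| ≤ 1 * (r * γ ^ (-r - 1) * |a i - b i|) := by
        gcongr
        exacts [hw1 i hi, abs_rpow_neg_sub_rpow_neg_le hγ hr (ha i hi) (hb i hi)]
    _ = r * γ ^ (-r - 1) * |a i - b i| := one_mul _

theorem sum_abs_normalize_mul_rpow_neg_sub_le {ι : Type*} (s : Finset ι) {γ δ r : ℝ}
    (hγ : 0 < γ) (hδ : 0 < δ) (hr : 0 ≤ r) (w a b : ι → ℝ) (hw0 : ∀ i ∈ s, 0 ≤ w i)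
    (hw1 : ∀ i ∈ s, w i ≤ 1) (ha : ∀ i ∈ s, γ ≤ a i) (hb : ∀ i ∈ s, γ ≤ b i)
    (hZa : δ ≤ ∑ i ∈ s, w i * a i ^ (-r)) (hZb : δ ≤ ∑ i ∈ s, w i * b i ^ (-r)) :
    ∑ i ∈ s, |w i * a i ^ (-r) / ∑ j ∈ s, w j * a j ^ (-r)
        - w i * b i ^ (-r) / ∑ j ∈ s, w j * b j ^ (-r)|
      ≤ 2 * δ⁻¹ * (r * γ ^ (-r - 1)) * ∑ i ∈ s, |a i - b i| := by
  have hnormalise := sum_abs_div_sum_sub_div_sum_le s (fun i => w i * a i ^ (-r))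
    (fun i => w i * b i ^ (-r))
    (fun i hi => mul_nonneg (hw0 i hi) (Real.rpow_nonneg (hγ.le.trans (hb i hi)) _))
    (hδ.trans_le hZa) (hδ.trans_le hZb)
  refine hnormalise.trans ?_
  calc _ ≤ 2 * δ⁻¹ * (r * γ ^ (-r - 1) * ∑ i ∈ s, |a i - b i|) := by
        gcongr
        exact sum_abs_mul_rpow_neg_sub_le s hγ hr w a b hw0 hw1 ha hb
    _ = _ := by ring

theorem sum_prod_snd_eq_card_mul {α β : Type*} [Fintype α] [Fintype β] (f : β → ℝ) :
    ∑ c : α × β, f c.2 = Fintype.card α * ∑ y, f y := by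
  simp [Fintype.sum_prod_type]

/-- The generator best-response map
`T_φ(p_θ)(x̃|x,y) = p_ref(x̃|x,y) p_θ(y|x̃)^{-1/β} / Σ_{x̃'} p_ref(x̃'|x,y) p_θ(y|x̃')^{-1/β}`
is Lipschitz in ℓ¹ norm with constant `2 δ⁻¹ β⁻¹ γ^{-1-1/β} |X|`. -/
theorem stmt_13 {X Xt : Type*} [Fintype X] [Fintype Xt]
    (β γ δ : ℝ) (hβ : 0 < β) (hγ : 0 < γ) (hδ : 0 < δ)
    (pref : X × Bool → Xt → ℝ) (hpref0 : ∀ c xt, 0 ≤ pref c xt)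
    (hpref1 : ∀ c, ∑ xt : Xt, pref c xt = 1)
    (θ θ' : Xt → Bool → ℝ)
    (hθ : ∀ xt y, θ xt y ∈ Set.Icc γ 1) (hθ' : ∀ xt y, θ' xt y ∈ Set.Icc γ 1)
    (hZ : ∀ c : X × Bool, δ ≤ ∑ xt : Xt, pref c xt * θ xt c.2 ^ (-(1 / β)))
    (hZ' : ∀ c : X × Bool, δ ≤ ∑ xt : Xt, pref c xt * θ' xt c.2 ^ (-(1 / β))) :
    ∑ c : X × Bool, ∑ xt : Xt,
        |pref c xt * θ xt c.2 ^ (-(1 / β))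
            / (∑ xt' : Xt, pref c xt' * θ xt' c.2 ^ (-(1 / β)))
          - pref c xt * θ' xt c.2 ^ (-(1 / β))
            / (∑ xt' : Xt, pref c xt' * θ' xt' c.2 ^ (-(1 / β)))|
      ≤ 2 * δ⁻¹ * β⁻¹ * γ ^ (-1 - 1 / β) * (Fintype.card X : ℝ) *
          ∑ xt : Xt, ∑ y : Bool, |θ xt y - θ' xt y| := by
  have hpref_le_one : ∀ c xt, pref c xt ≤ 1 := fun c xt =>
    hpref1 c ▸ single_le_sum (fun i _ => hpref0 c i) (mem_univ xt)
  calc _ ≤ ∑ c : X × Bool, 2 * δ⁻¹ * (1 / β * γ ^ (-(1 / β) - 1)) *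
        ∑ xt : Xt, |θ xt c.2 - θ' xt c.2| :=
        sum_le_sum fun c _ => sum_abs_normalize_mul_rpow_neg_sub_le univ hγ hδ (by positivity)
          (pref c) (θ · c.2) (θ' · c.2) (fun xt _ => hpref0 c xt)
          (fun xt _ => hpref_le_one c xt) (fun xt _ => (hθ xt c.2).1)
          (fun xt _ => (hθ' xt c.2).1) (hZ c) (hZ' c)
    _ = _ := by
        rw [← mul_sum, sum_prod_snd_eq_card_mul (fun y => ∑ xt : Xt, |θ xt y - θ' xt y|),
          sum_comm, neg_sub_comm]
        ring
end

section
/- The classifier best-response map T_θ, defined by T_θ(p_φ)(y|x̃) = Σ_x ρ(x,y) p_φ(x̃|x,y) / Σ_{y'} Σ_x ρ(x,y') p_φ(x̃|x,y'), is Lipschitz in ℓ¹ norm: if ρ(x,y) ≤ 1/|X| for all (x,y) and the denominator satisfies Σ_{y,x} ρ(x,y) p_φ(x̃|x,y) ≥ α > 0 for all x̃, then ‖T_θ(p_φ) - T_θ(p_{φ'})‖₁ ≤ 2 α^{-1} |X|^{-1} ‖p_φ - p_{φ'}‖₁. -/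
/-!
For each `x̃` the posterior `T_θ(p)(·|x̃)` is the normalization of the vector
`y ↦ ∑ x, ρ(x,y) p(x̃|x,y)`. Normalization is `2 / mass`-Lipschitz in ℓ¹, because
`a/A - b/B = (a - b)/A + b (1/A - 1/B)` and `∑ b |1/A - 1/B| ≤ |A - B|/A ≤ ‖a - b‖₁/A`;
and since `ρ ≤ 1/|X|`, the unnormalized vectors differ by at most `|X|⁻¹ ∑ₓ |p_φ - p_φ'|`.
-/

open Finset

theorem sum_abs_div_sum_sub_div_sum_le_s14 {ι : Type*} [Fintype ι] {a b : ι → ℝ}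
    (ha : 0 < ∑ i, a i) (hb : ∀ i, 0 ≤ b i) :
    ∑ i, |a i / ∑ j, a j - b i / ∑ j, b j| ≤ 2 / (∑ j, a j) * ∑ i, |a i - b i| := by
  set A := ∑ j, a j
  set B := ∑ j, b j
  set D := ∑ i, |a i - b i|
  have hB : 0 ≤ B := sum_nonneg fun i _ => hb i
  have hsplit : ∀ i, a i / A - b i / B = (a i - b i) / A + b i * (A⁻¹ - B⁻¹) := fun i => by
    ring
  have hmass : B * |A⁻¹ - B⁻¹| ≤ |A - B| / A := by
    rcases hB.eq_or_lt with hB0 | hB0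
    · rw [← hB0, zero_mul]
      positivity
    · refine le_of_eq ?_
      calc B * |A⁻¹ - B⁻¹| = |B * (A⁻¹ - B⁻¹)| := by rw [abs_mul, abs_of_pos hB0]
        _ = |(B - A) / A| := by congr 1; field_simp
        _ = |A - B| / A := by rw [abs_div, abs_of_pos ha, abs_sub_comm]
  have hAB : |A - B| ≤ D := by
    simpa only [A, B, D, ← sum_sub_distrib] using abs_sum_le_sum_abs (fun i => a i - b i) univ
  calc ∑ i, |a i / A - b i / B| ≤ ∑ i, (|a i - b i| / A + b i * |A⁻¹ - B⁻¹|) := by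
        refine sum_le_sum fun i _ => ?_
        rw [hsplit]
        refine (abs_add_le _ _).trans_eq ?_
        rw [abs_div, abs_mul, abs_of_pos ha, abs_of_nonneg (hb i)]
    _ = D / A + B * |A⁻¹ - B⁻¹| := by rw [sum_add_distrib, ← sum_div, ← sum_mul]
    _ ≤ D / A + D / A := by gcongr; exact hmass.trans (by gcongr)
    _ = 2 / A * D := by ring

theorem abs_sum_mul_le_mul_sum_abs {ι : Type*} (s : Finset ι) {w f : ι → ℝ} {M : ℝ}
    (hw : ∀ i ∈ s, 0 ≤ w i) (hwM : ∀ i ∈ s, w i ≤ M) :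
    |∑ i ∈ s, w i * f i| ≤ M * ∑ i ∈ s, |f i| := by
  rw [mul_sum]
  refine (abs_sum_le_sum_abs _ _).trans (sum_le_sum fun i hi => ?_)
  rw [abs_mul, abs_of_nonneg (hw i hi)]
  exact mul_le_mul_of_nonneg_right (hwM i hi) (abs_nonneg _)

theorem stmt_14_general {X Xt : Type*} [Fintype X] [Fintype Xt]
    (α : ℝ) (hα : 0 < α)
    (ρ : X × Bool → ℝ) (hρ0 : ∀ c, 0 ≤ ρ c)
    (hρu : ∀ c : X × Bool, ρ c ≤ (Fintype.card X : ℝ)⁻¹)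
    (φ φ' : X × Bool → Xt → ℝ)
    (hφ'0 : ∀ c xt, 0 ≤ φ' c xt)
    (hden : ∀ xt : Xt, α ≤ ∑ y : Bool, ∑ x : X, ρ (x, y) * φ (x, y) xt) :
    ∑ xt : Xt, ∑ y : Bool,
        |(∑ x : X, ρ (x, y) * φ (x, y) xt)
            / (∑ y' : Bool, ∑ x : X, ρ (x, y') * φ (x, y') xt)
          - (∑ x : X, ρ (x, y) * φ' (x, y) xt)
            / (∑ y' : Bool, ∑ x : X, ρ (x, y') * φ' (x, y') xt)|
      ≤ 2 * α⁻¹ * (Fintype.card X : ℝ)⁻¹ *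
          ∑ c : X × Bool, ∑ xt : Xt, |φ c xt - φ' c xt| := by
  rw [sum_comm (f := fun c xt => |φ c xt - φ' c xt|), mul_sum]
  refine sum_le_sum fun xt _ => ?_
  have hclass : ∀ y, |∑ x : X, ρ (x, y) * φ (x, y) xt - ∑ x : X, ρ (x, y) * φ' (x, y) xt|
      ≤ (Fintype.card X : ℝ)⁻¹ * ∑ x : X, |φ (x, y) xt - φ' (x, y) xt| := fun y => by
    simpa only [← sum_sub_distrib, ← mul_sub] using
      abs_sum_mul_le_mul_sum_abs univ (fun x _ => hρ0 (x, y)) (fun x _ => hρu (x, y))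
  refine (sum_abs_div_sum_sub_div_sum_le_s14 (hα.trans_le (hden xt))
    fun y => sum_nonneg fun x _ => mul_nonneg (hρ0 _) (hφ'0 _ _)).trans ?_
  calc _ ≤ 2 / α * ∑ y : Bool, (Fintype.card X : ℝ)⁻¹ * ∑ x : X, |φ (x, y) xt - φ' (x, y) xt| := by
        gcongr with y
        exacts [hden xt, hclass y]
    _ = _ := by rw [Fintype.sum_prod_type_right, ← mul_sum]; ring

/-- The classifier best-response map (Bayes posterior)
`T_θ(p_φ)(y|x̃) = Σ_x ρ(x,y) p_φ(x̃|x,y) / Σ_{y',x} ρ(x,y') p_φ(x̃|x,y')`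
is Lipschitz in ℓ¹ norm with constant `2 α⁻¹ |X|⁻¹`, assuming `ρ(x,y) ≤ 1/|X|` and the
denominators are bounded below by `α > 0`. -/
theorem stmt_14 {X Xt : Type*} [Fintype X] [Fintype Xt]
    (α : ℝ) (hα : 0 < α)
    (ρ : X × Bool → ℝ) (hρ0 : ∀ c, 0 ≤ ρ c) (hρ1 : ∑ c : X × Bool, ρ c = 1)
    (hρu : ∀ c : X × Bool, ρ c ≤ (Fintype.card X : ℝ)⁻¹)
    (φ φ' : X × Bool → Xt → ℝ)
    (hφ0 : ∀ c xt, 0 ≤ φ c xt) (hφ1 : ∀ c, ∑ xt : Xt, φ c xt = 1)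
    (hφ'0 : ∀ c xt, 0 ≤ φ' c xt) (hφ'1 : ∀ c, ∑ xt : Xt, φ' c xt = 1)
    (hden : ∀ xt : Xt, α ≤ ∑ y : Bool, ∑ x : X, ρ (x, y) * φ (x, y) xt)
    (hden' : ∀ xt : Xt, α ≤ ∑ y : Bool, ∑ x : X, ρ (x, y) * φ' (x, y) xt) :
    ∑ xt : Xt, ∑ y : Bool,
        |(∑ x : X, ρ (x, y) * φ (x, y) xt)
            / (∑ y' : Bool, ∑ x : X, ρ (x, y') * φ (x, y') xt)
          - (∑ x : X, ρ (x, y) * φ' (x, y) xt)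
            / (∑ y' : Bool, ∑ x : X, ρ (x, y') * φ' (x, y') xt)|
      ≤ 2 * α⁻¹ * (Fintype.card X : ℝ)⁻¹ *
          ∑ c : X × Bool, ∑ xt : Xt, |φ c xt - φ' c xt| :=
  stmt_14_general α hα ρ hρ0 hρu φ φ' hφ'0 hden
end
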